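/- arXiv:0804.0396 — 2 statements merged into one kernel-verified Lean document; each statement's English description precedes it below -/
import Mathlib

section
/- In the iterated construction built from a pair-instance B = (E, Φ, Γ, e₁, e₂): if there exists X ∈ Φ such that for every S ∈ Γ it is not the case that both e₁ S ∈ X and e₂ S ∈ X, then for every t : ℕ there exists a solution of the instance I_t whose cost under every scenario of I_t is at most 1. -/
/-- An instance: a finite type of edges, a nonempty finite family of feasible solutions
(finsets of edges), and scenarios indexed by a finite type, each scenario being a cost
function from edges to ℕ. -/
structure Inst where
  E : Type
  [fintE : Fintype E]
  [decE : DecidableEq E]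
  sols : Finset (Finset E)
  sols_nonempty : sols.Nonempty
  Scen : Type
  [fintScen : Fintype Scen]
  cost : Scen → E → ℕ

attribute [instance] Inst.fintE Inst.decE Inst.fintScen

/-- The cost of a solution `X` under scenario `S`. -/
def Inst.solCost (I : Inst) (X : Finset I.E) (S : I.Scen) : ℕ :=
  ∑ e ∈ X, I.cost S e

/-- A pair-instance: scenarios are indexed by a finite type `Scen` equipped with maps
`e₁ e₂ : Scen → E` with `e₁ S ≠ e₂ S`; the scenario of `S` gives cost 1 to `e₁ S` and
`e₂ S` and cost 0 to every other edge. -/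
structure PairInst where
  E : Type
  [fintE : Fintype E]
  [decE : DecidableEq E]
  sols : Finset (Finset E)
  sols_nonempty : sols.Nonempty
  Scen : Type
  [fintScen : Fintype Scen]
  e₁ : Scen → E
  e₂ : Scen → E
  ne : ∀ S, e₁ S ≠ e₂ S

attribute [instance] PairInst.fintE PairInst.decE PairInst.fintScen

/-- A pair-instance viewed as an instance, with the described 0/1 scenario costs. -/
def PairInst.toInst (B : PairInst) : Inst where
  E := B.E
  sols := B.sols
  sols_nonempty := B.sols_nonempty
  Scen := B.Scen
  cost := fun S e => if e = B.e₁ S ∨ e = B.e₂ S then 1 else 0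

/-- The product solution `sol(X, f) = {(e, x) | e ∈ X, x ∈ f e}`. -/
def PairInst.sol (B : PairInst) (I : Inst) (X : Finset B.E) (f : B.E → Finset I.E) :
    Finset (B.E × I.E) :=
  X.biUnion fun e => {e} ×ˢ f e

/-- The product of a pair-instance (outer) with an instance (inner). -/
def PairInst.prod (B : PairInst) (I : Inst) : Inst where
  E := B.E × I.E
  sols := (B.sols ×ˢ Fintype.piFinset fun _ : B.E => I.sols).image
    fun p => B.sol I p.1 p.2
  sols_nonempty := by
    obtain ⟨X, hX⟩ := B.sols_nonempty
    obtain ⟨Y, hY⟩ := I.sols_nonempty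
    have hf : (fun _ : B.E => Y) ∈ Fintype.piFinset fun _ : B.E => I.sols :=
      Fintype.mem_piFinset.mpr fun _ => hY
    exact Finset.Nonempty.image ⟨(X, fun _ => Y), Finset.mem_product.mpr ⟨hX, hf⟩⟩ _
  Scen := B.Scen × I.Scen × I.Scen
  cost := fun S p =>
    if p.1 = B.e₁ S.1 then I.cost S.2.1 p.2
    else if p.1 = B.e₂ S.1 then I.cost S.2.2 p.2
    else 0

/-- The iterated construction: `I_0 = B` and `I_{t+1} = B.prod I_t`. -/
def PairInst.iter (B : PairInst) : ℕ → Inst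
  | 0 => B.toInst
  | t + 1 => B.prod (B.iter t)

/-!
Fix `X ∈ Φ` meeting each pair `{e₁ S, e₂ S}` at most once. In `I_{t+1}`, take `sol(X, f)` with
`f` constantly equal to a good solution `Y` of `I_t`: under the scenario `(S, S₁, S₂)` only the
edges over `e₁ S` and `e₂ S` cost anything, at most one of these lies in `X`, and the edges over
it cost exactly the cost of `Y` under `S₁` or `S₂`, which is at most 1.
-/

namespace PairInst

variable (B : PairInst)

lemma toInst_solCost (X : Finset B.E) (S : B.Scen) :
    B.toInst.solCost X S = (if B.e₁ S ∈ X then 1 else 0) + (if B.e₂ S ∈ X then 1 else 0) := by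
  have hne := B.ne S
  change ∑ e ∈ X, (if e = B.e₁ S ∨ e = B.e₂ S then 1 else 0) = _
  rw [← Finset.sum_ite_eq' X (B.e₁ S) (fun _ => 1), ← Finset.sum_ite_eq' X (B.e₂ S) (fun _ => 1),
    ← Finset.sum_add_distrib]
  refine Finset.sum_congr rfl fun e _ => ?_
  split_ifs <;> simp_all

lemma mem_sol {I : Inst} {X : Finset B.E} {f : B.E → Finset I.E} {p : B.E × I.E} :
    p ∈ B.sol I X f ↔ p.1 ∈ X ∧ p.2 ∈ f p.1 := by
  obtain ⟨e, x⟩ := p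
  simp [sol]

lemma prod_solCost_sol (I : Inst) (X : Finset B.E) (f : B.E → Finset I.E) (S : B.Scen)
    (S₁ S₂ : I.Scen) :
    (B.prod I).solCost (B.sol I X f) (S, S₁, S₂) =
      (if B.e₁ S ∈ X then I.solCost (f (B.e₁ S)) S₁ else 0) +
        (if B.e₂ S ∈ X then I.solCost (f (B.e₂ S)) S₂ else 0) := by
  have hne := B.ne S
  change ∑ p ∈ B.sol I X f, (if p.1 = B.e₁ S then I.cost S₁ p.2
    else if p.1 = B.e₂ S then I.cost S₂ p.2 else 0) = _
  rw [Finset.sum_finset_product _ _ _ fun _ => B.mem_sol,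
    ← Finset.sum_ite_eq' X (B.e₁ S) (fun e => I.solCost (f e) S₁),
    ← Finset.sum_ite_eq' X (B.e₂ S) (fun e => I.solCost (f e) S₂), ← Finset.sum_add_distrib]
  refine Finset.sum_congr rfl fun e _ => ?_
  split_ifs <;> simp_all [Inst.solCost]

lemma sol_mem_prod_sols {I : Inst} {X : Finset B.E} {f : B.E → Finset I.E} (hX : X ∈ B.sols)
    (hf : ∀ e, f e ∈ I.sols) : B.sol I X f ∈ (B.prod I).sols :=
  Finset.mem_image_of_mem (fun p : Finset B.E × (B.E → Finset I.E) => B.sol I p.1 p.2)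
    (a := (X, f)) (Finset.mem_product.2 ⟨hX, Fintype.mem_piFinset.2 hf⟩)

variable {B}

lemma toInst_solCost_le_one {X : Finset B.E} (hX : ∀ S, ¬(B.e₁ S ∈ X ∧ B.e₂ S ∈ X))
    (S : B.Scen) : B.toInst.solCost X S ≤ 1 := by
  rw [toInst_solCost]
  have := hX S
  split_ifs <;> simp_all

lemma prod_solCost_sol_const_le_one {I : Inst} {X : Finset B.E} {Y : Finset I.E}
    (hX : ∀ S, ¬(B.e₁ S ∈ X ∧ B.e₂ S ∈ X)) (hY : ∀ S, I.solCost Y S ≤ 1)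
    (S : (B.prod I).Scen) : (B.prod I).solCost (B.sol I X fun _ => Y) S ≤ 1 := by
  obtain ⟨S, S₁, S₂⟩ := S
  rw [prod_solCost_sol]
  have := hX S
  split_ifs <;> simp_all

end PairInst

/-- If some `X ∈ Φ` never contains both `e₁ S` and `e₂ S`, then for every
`t` there is a solution of `I_t` whose cost under every scenario of `I_t` is at most 1. -/
theorem iter_upper_bound_one (B : PairInst)
    (h : ∃ X ∈ B.sols, ∀ S : B.Scen, ¬(B.e₁ S ∈ X ∧ B.e₂ S ∈ X)) :
    ∀ t : ℕ, ∃ X ∈ (B.iter t).sols,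
      ∀ S : (B.iter t).Scen, (B.iter t).solCost X S ≤ 1 := by
  obtain ⟨X, hX, hXs⟩ := h
  intro t
  induction t with
  | zero => exact ⟨X, hX, PairInst.toInst_solCost_le_one hXs⟩
  | succ t ih =>
    obtain ⟨Y, hY, hYs⟩ := ih
    exact ⟨B.sol _ X fun _ => Y, B.sol_mem_prod_sols hX fun _ => hY,
      PairInst.prod_solCost_sol_const_le_one hXs hYs⟩
end

section
/- The 3-CNF formula C is satisfiable if and only if there exists a spanning tree T of H_m such that for every pair of contradictory occurrences o and o', at most one of the two literal edges corresponding to o and o' belongs to T. (Equivalently: the minmax spanning tree value of the constructed instance is at most 1 if C is satisfiable and at least 2 otherwise.) -/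
/-! A spanning tree of `H_m` contains, for every clause `i`, some literal edge `u_i — w_{i,j}`:
these are the only edges of `H_m` leaving the cut `{u_k | k ≤ i} ∪ {w_{k,j} | k < i}`, which
separates `u_i` from `u_{i+1}`. If no two literal edges of the tree are contradictory, the
literals they select can be made true simultaneously, and one of them lies in each clause.
Conversely, picking a true literal `(i, f i)` in each clause, its literal edges together with
all `3m` dummy edges `w_{i,j} — u_{i+1}` form a connected graph with `4m` edges on `4m + 1`
vertices, hence a spanning tree, and all its literal edges carry true literals. -/

/-- Vertex type of the path graph `H_m`: hub vertices `u_k = Sum.inl k` for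
`k : Fin (m+1)` and literal vertices `w_{i,j} = Sum.inr (i, j)`. -/
abbrev Vpath (m : ℕ) := Fin (m + 1) ⊕ (Fin m × Fin 3)

/-- The series-parallel graph `H_m` whose edges are the literal edges `u_i — w_{i,j}`
and the dummy edges `w_{i,j} — u_{i+1}` for `i : Fin m`, `j : Fin 3`. -/
def Hm (m : ℕ) : SimpleGraph (Vpath m) :=
  SimpleGraph.fromEdgeSet {e : Sym2 (Vpath m) | ∃ i : Fin m, ∃ j : Fin 3,
    e = s(Sum.inl i.castSucc, Sum.inr (i, j)) ∨
    e = s(Sum.inr (i, j), Sum.inl i.succ)}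

theorem exists_assignment_of_consistent {ι α : Type*} (lit : ι → α × Bool)
    (h : ∀ o o', (lit o).1 = (lit o').1 → (lit o).2 = (lit o').2) :
    ∃ a : α → Bool, ∀ o, a (lit o).1 = (lit o).2 := by
  classical
  refine ⟨fun v => decide (∃ o, (lit o).1 = v ∧ (lit o).2 = true), fun o => ?_⟩
  cases hb : (lit o).2
  · simpa using fun o' hv => hb ▸ h o' o hv
  · simpa using ⟨o, rfl, hb⟩

namespace Hm

open SimpleGraph

variable {m : ℕ}

def literalEdge (i : Fin m) (j : Fin 3) : Sym2 (Vpath m) :=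
  s(Sum.inl i.castSucc, Sum.inr (i, j))

def dummyEdge (i : Fin m) (j : Fin 3) : Sym2 (Vpath m) :=
  s(Sum.inr (i, j), Sum.inl i.succ)

lemma literalEdge_inj {i i' : Fin m} {j j' : Fin 3} :
    literalEdge i j = literalEdge i' j' ↔ i = i' ∧ j = j' := by
  simp [literalEdge]

lemma dummyEdge_inj {i i' : Fin m} {j j' : Fin 3} :
    dummyEdge i j = dummyEdge i' j' ↔ i = i' ∧ j = j' := by
  simp +contextual [dummyEdge]

lemma dummyEdge_ne_literalEdge (i i' : Fin m) (j j' : Fin 3) :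
    dummyEdge i j ≠ literalEdge i' j' := by
  grind [dummyEdge, literalEdge, Sym2.eq_iff, Fin.ext_iff, Fin.val_castSucc]

def cutAt (i : Fin m) : Set (Vpath m) :=
  {v | Sum.elim (fun k : Fin (m + 1) => (k : ℕ) ≤ i) (fun o : Fin m × Fin 3 => (o.1 : ℕ) < i) v}

lemma eq_literalEdge_of_adj_of_mem_cutAt {i : Fin m} {x y : Vpath m} (h : (Hm m).Adj x y)
    (hx : x ∈ cutAt i) (hy : y ∉ cutAt i) : ∃ j, s(x, y) = literalEdge i j := by
  obtain ⟨⟨i₀, j₀, he | he⟩, -⟩ := h <;> rw [Sym2.eq_iff] at he <;>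
    rcases he with ⟨rfl, rfl⟩ | ⟨rfl, rfl⟩ <;>
    simp only [cutAt, Set.mem_ofPred_eq, Sum.elim_inl, Sum.elim_inr, Fin.val_castSucc,
      Fin.val_succ, not_le, not_lt] at hx hy
  · obtain rfl : i₀ = i := Fin.ext (by omega)
    exact ⟨j₀, rfl⟩
  all_goals omega

lemma exists_literalEdge_mem {T : SimpleGraph (Vpath m)} (hle : T ≤ Hm m) (hT : T.Connected)
    (i : Fin m) : ∃ j, literalEdge i j ∈ T.edgeSet := by
  obtain ⟨p⟩ := hT (Sum.inl i.castSucc) (Sum.inl i.succ)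
  obtain ⟨d, -, hx, hy⟩ := p.exists_boundary_dart (cutAt i) (by simp [cutAt]) (by simp [cutAt])
  obtain ⟨j, hj⟩ := eq_literalEdge_of_adj_of_mem_cutAt (hle d.adj) hx hy
  exact ⟨j, hj ▸ d.adj⟩

def choiceEdge (f : Fin m → Fin 3) : Fin m ⊕ (Fin m × Fin 3) → Sym2 (Vpath m) :=
  Sum.elim (fun i => literalEdge i (f i)) (fun o => dummyEdge o.1 o.2)

def choiceTree (f : Fin m → Fin 3) : SimpleGraph (Vpath m) :=
  fromEdgeSet (Set.range (choiceEdge f))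

variable (f : Fin m → Fin 3)

lemma choiceEdge_injective : Function.Injective (choiceEdge f) := by
  rintro (i | ⟨i, j⟩) (i' | ⟨i', j'⟩) h
  · exact congrArg Sum.inl (literalEdge_inj.1 h).1
  · exact absurd h.symm (dummyEdge_ne_literalEdge _ _ _ _)
  · exact absurd h (dummyEdge_ne_literalEdge _ _ _ _)
  · obtain ⟨rfl, rfl⟩ := dummyEdge_inj.1 h
    rfl

lemma not_isDiag_choiceEdge (o) : ¬ (choiceEdge f o).IsDiag := by
  rcases o with i | ⟨i, j⟩ <;> simp [choiceEdge, literalEdge, dummyEdge]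

lemma edgeSet_choiceTree : (choiceTree f).edgeSet = Set.range (choiceEdge f) := by
  rw [choiceTree, edgeSet_fromEdgeSet, sdiff_eq_left, Set.disjoint_left]
  rintro _ ⟨o, rfl⟩
  exact not_isDiag_choiceEdge f o

lemma choiceTree_le : choiceTree f ≤ Hm m := by
  refine fromEdgeSet_mono ?_
  rintro _ ⟨i | ⟨i, j⟩, rfl⟩
  exacts [⟨i, f i, Or.inl rfl⟩, ⟨i, j, Or.inr rfl⟩]

lemma literalEdge_mem_choiceTree_iff {i : Fin m} {j : Fin 3} :
    literalEdge i j ∈ (choiceTree f).edgeSet ↔ j = f i := by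
  rw [edgeSet_choiceTree]
  constructor
  · rintro ⟨i' | ⟨i', j'⟩, h⟩
    · obtain ⟨rfl, rfl⟩ := literalEdge_inj.1 h
      rfl
    · exact absurd h (dummyEdge_ne_literalEdge _ _ _ _)
  · rintro rfl
    exact ⟨.inl i, rfl⟩

lemma choiceTree_connected : (choiceTree f).Connected := by
  have adj {x y : Vpath m} (o) (h : choiceEdge f o = s(x, y)) : (choiceTree f).Adj x y :=
    (mem_edgeSet _).1 (edgeSet_choiceTree f ▸ ⟨o, h⟩)
  have reach_hub (k : Fin (m + 1)) : (choiceTree f).Reachable (.inl 0) (.inl k) := by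
    induction k using Fin.induction with
    | zero => rfl
    | succ i ih =>
      exact ih.trans ((adj (.inl i) rfl).reachable.trans (adj (.inr (i, f i)) rfl).reachable)
  refine (connected_iff_exists_forall_reachable _).2 ⟨.inl 0, ?_⟩
  rintro (k | ⟨i, j⟩)
  · exact reach_hub k
  · exact (reach_hub i.succ).trans (adj (.inr (i, j)) rfl).reachable.symm

lemma choiceTree_isTree : (choiceTree f).IsTree := by
  rw [isTree_iff_connected_and_card, edgeSet_choiceTree,
    Nat.card_range_of_injective (choiceEdge_injective f)]
  refine ⟨choiceTree_connected f, ?_⟩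
  simp only [Nat.card_eq_fintype_card, Fintype.card_sum, Fintype.card_prod, Fintype.card_fin]
  ring

end Hm

/-- The 3-CNF formula `C` is satisfiable iff there is a spanning tree `T`
of `H_m` such that for every pair of contradictory occurrences, at most one of the two
corresponding literal edges belongs to `T`. -/
theorem threeSat_iff_spanningTree (n m : ℕ) (C : Fin m → Fin 3 → Fin n × Bool) :
    (∃ a : Fin n → Bool, ∀ i : Fin m, ∃ j : Fin 3, a (C i j).1 = (C i j).2) ↔
    (∃ T : SimpleGraph (Vpath m), T ≤ Hm m ∧ T.Connected ∧ T.IsAcyclic ∧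
      ∀ (i i' : Fin m) (j j' : Fin 3),
        ((i, j) : Fin m × Fin 3) ≠ (i', j') →
        (C i j).1 = (C i' j').1 → (C i j).2 ≠ (C i' j').2 →
        ¬(s(Sum.inl i.castSucc, Sum.inr (i, j)) ∈ T.edgeSet ∧
          s(Sum.inl i'.castSucc, Sum.inr (i', j')) ∈ T.edgeSet)) := by
  constructor
  · rintro ⟨a, ha⟩
    choose f hf using ha
    have hT := Hm.choiceTree_isTree f
    refine ⟨Hm.choiceTree f, Hm.choiceTree_le f, hT.connected, hT.isAcyclic, ?_⟩
    rintro i i' j j' - hvar hsign ⟨h, h'⟩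
    obtain rfl := (Hm.literalEdge_mem_choiceTree_iff f).1 h
    obtain rfl := (Hm.literalEdge_mem_choiceTree_iff f).1 h'
    exact hsign (by rw [← hf i, ← hf i', hvar])
  · rintro ⟨T, hle, hconn, -, hcons⟩
    choose f hf using Hm.exists_literalEdge_mem hle hconn
    obtain ⟨a, ha⟩ := exists_assignment_of_consistent (fun i => C i (f i)) fun i i' hvar => by
      by_contra hsign
      have hne : ((i, f i) : Fin m × Fin 3) ≠ (i', f i') := by
        rintro h
        obtain ⟨rfl, -⟩ := Prod.mk.inj h
        exact hsign rfl
      exact hcons i i' (f i) (f i') hne hvar hsign ⟨hf i, hf i'⟩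
    exact ⟨a, fun i => ⟨f i, ha i⟩⟩
end
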